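/- arXiv:1610.03883 — 8 statements merged into one kernel-verified Lean document; each statement's English description precedes it below -/
import Mathlib

section
/- For all integers k ≥ 1, F_{4k} = F_{k+1}^4 + 2·F_k^4 − F_{k−1}^4 + 4·F_k^3·F_{k−1}, where F is the Fibonacci sequence. -/
theorem stmt_6 (k : ℕ) (hk : 1 ≤ k) :
    (Nat.fib (4*k) : ℤ) = (Nat.fib (k+1) : ℤ)^4 + 2 * (Nat.fib k : ℤ)^4
      - (Nat.fib (k-1) : ℤ)^4 + 4 * (Nat.fib k : ℤ)^3 * (Nat.fib (k-1) : ℤ) := by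
  obtain ⟨m, rfl⟩ : ∃ m, k = m + 1 := ⟨k - 1, (Nat.succ_pred_eq_of_pos hk).symm⟩
  have h1 : 4 * (m + 1) = (2*m+1) + (2*m+2) + 1 := by ring
  have h2 : Nat.fib (4 * (m+1)) = Nat.fib (2*m+1) * Nat.fib (2*m+2)
      + Nat.fib (2*m+2) * Nat.fib (2*m+3) := by
    rw [h1, Nat.fib_add]
  have h3 : Nat.fib (2*m+1) = Nat.fib m * Nat.fib m + Nat.fib (m+1) * Nat.fib (m+1) := by
    have : 2*m+1 = m + m + 1 := by ring
    rw [this, Nat.fib_add]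
  have h4 : Nat.fib (2*m+2) = Nat.fib m * Nat.fib (m+1) + Nat.fib (m+1) * Nat.fib (m+2) := by
    have : 2*m+2 = m + (m+1) + 1 := by ring
    rw [this, Nat.fib_add]
  have h6 : Nat.fib (2*m+3) = Nat.fib (m+1) * Nat.fib (m+1) + Nat.fib (m+2) * Nat.fib (m+2) := by
    have : 2*m+3 = (m+1) + (m+1) + 1 := by ring
    rw [this, Nat.fib_add]
  have h5 : Nat.fib (m+2) = Nat.fib m + Nat.fib (m+1) := by
    rw [Nat.fib_add_two]
  rw [h5] at h4 h6
  rw [h4, h6] at h2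
  simp only [Nat.add_sub_cancel]
  rw [h2, h3, show m+1+1 = m+2 from rfl, h5]
  push_cast
  ring
end

section
/- For all integers k ≥ 1, F_{5k} = F_{k+1}^5 + 4·F_k^5 − F_{k−1}^5 + 10·F_{k+1}·F_k^3·F_{k−1}, where F is the Fibonacci sequence. -/
theorem stmt_7 (k : ℕ) (hk : 1 ≤ k) :
    (Nat.fib (5*k) : ℤ) = (Nat.fib (k+1) : ℤ)^5 + 4 * (Nat.fib k : ℤ)^5
      - (Nat.fib (k-1) : ℤ)^5
      + 10 * (Nat.fib (k+1) : ℤ) * (Nat.fib k : ℤ)^3 * (Nat.fib (k-1) : ℤ) := by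
  obtain ⟨m, rfl⟩ : ∃ m, k = m + 1 := ⟨k - 1, (Nat.succ_pred_eq_of_pos hk).symm⟩
  simp only [Nat.add_sub_cancel]
  have F : ∀ p q : ℕ, (Nat.fib (p+q+1) : ℤ)
      = Nat.fib p * Nat.fib q + Nat.fib (p+1) * Nat.fib (q+1) := by
    intro p q; exact_mod_cast Nat.fib_add p q
  have e22 := F m (m+1)
  have e23 := F (m+1) (m+1)
  have e33 := F m (2*m+2)
  have e34 := F (m+1) (2*m+2)
  have e44 := F m (3*m+3)
  have e45 := F (m+1) (3*m+3)
  have e55 := F m (4*m+4)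
  have h2 : (Nat.fib (m+1+1) : ℤ) = Nat.fib m + Nat.fib (m+1) := by
    exact_mod_cast Nat.fib_add_two
  rw [show m+(m+1)+1 = 2*m+2 by ring] at e22
  rw [show (m+1)+(m+1)+1 = 2*m+3 by ring] at e23
  rw [show m+(2*m+2)+1 = 3*m+3 by ring, show 2*m+2+1 = 2*m+3 by ring] at e33
  rw [show (m+1)+(2*m+2)+1 = 3*m+4 by ring, show 2*m+2+1 = 2*m+3 by ring] at e34
  rw [show m+(3*m+3)+1 = 4*m+4 by ring, show 3*m+3+1 = 3*m+4 by ring] at e44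
  rw [show (m+1)+(3*m+3)+1 = 4*m+5 by ring, show 3*m+3+1 = 3*m+4 by ring] at e45
  rw [show m+(4*m+4)+1 = 5*(m+1) by ring, show 4*m+4+1 = 4*m+5 by ring] at e55
  rw [e55, e44, e45, e33, e34, e22, e23, h2]
  ring
end

section
/- Let P, Q be integers and U the Lucas sequence of the first kind with parameters P, Q. For all k ≥ 1, P·U_{3k} = U_{k+1}^3 + P·(U_3 − P^2)·U_k^3 + Q^3·U_{k−1}^3, where U_3 = P^2 − Q. -/
lemma lucas_add (P Q : ℤ) (U : ℕ → ℤ) (hU0 : U 0 = 0) (hU1 : U 1 = 1)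
    (hUrec : ∀ k, U (k+2) = P * U (k+1) - Q * U k) :
    ∀ m n, U (m + n + 1) = U (m+1) * U (n+1) - Q * U m * U n := by
  intro m
  induction m using Nat.twoStepInduction with
  | zero => intro n; simp [hU0, hU1]
  | one =>
    intro n
    have h2 : U 2 = P := by have := hUrec 0; simp [hU0, hU1] at this; linarith
    have := hUrec n
    simp only [show ∀ n, 1 + n + 1 = n + 2 from fun n => by ring] at *
    rw [this, h2, hU1]; ring
  | more m ih1 ih2 =>
    intro n
    have e1 : m + 2 + n + 1 = (m + n + 1) + 2 := by ring
    have e2 : m + 1 + n + 1 = (m + n + 1) + 1 := by ring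
    have r2 := ih2 n
    rw [e2] at r2
    have h4 : U (m+3) = P * U (m+2) - Q * U (m+1) := hUrec (m+1)
    have h5 : U (m+2) = P * U (m+1) - Q * U m := hUrec m
    have h6 : U (m+2+1) = U (m+3) := rfl
    rw [e1, hUrec, h6]
    linear_combination P * r2 - Q * (ih1 n) - U (n+1) * h4 + Q * U n * h5

theorem stmt_8 (P Q : ℤ) (U : ℕ → ℤ) (hU0 : U 0 = 0) (hU1 : U 1 = 1)
    (hUrec : ∀ k, U (k+2) = P * U (k+1) - Q * U k) (k : ℕ) (hk : 1 ≤ k) :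
    P * U (3*k) = (U (k+1))^3 + P * (U 3 - P^2) * (U k)^3 + Q^3 * (U (k-1))^3 := by
  obtain ⟨j, rfl⟩ := Nat.exists_eq_add_of_le hk
  have addf := lucas_add P Q U hU0 hU1 hUrec
  have h2 : U 2 = P := by have := hUrec 0; simp [hU0, hU1] at this; linarith
  have h3 : U 3 = P^2 - Q := by have := hUrec 1; rw [h2, hU1] at this; rw [this]; ring
  set a := U j with ha
  set b := U (j+1) with hb
  have hc : U (j+2) = P * b - Q * a := hUrec j
  have h21 : U (2*j+1) = b^2 - Q * a^2 := by
    have := addf j j; rw [show j + j + 1 = 2*j+1 by ring] at this; rw [this]; ring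
  have h22 : U (2*j+2) = U (j+2) * b - Q * b * a := by
    have := addf (j+1) j; rw [show j+1 + j + 1 = 2*j+2 by ring] at this; rw [this]
  have h33 : U (3*j+3) = U (2*j+2) * U (j+2) - Q * U (2*j+1) * b := by
    have := addf (2*j+1) (j+1); rw [show 2*j+1 + (j+1) + 1 = 3*j+3 by ring] at this; rw [this]
  have hk1 : j + 1 - 1 = j := by omega
  rw [show 3 * (1+j) = 3*j+3 by ring, show 1 + j + 1 = j + 2 by ring,
      show 1 + j = j + 1 by ring, hk1, h33, h22, h21, hc, h3]
  ring
end

section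
/- Let P, Q be integers and let U, V be the Lucas sequences of the first and second kind with parameters P, Q. For all integers m ≥ 1 and k ≥ 0, U_{mk} = Σ_{i=0}^{m} C(m,i)·(−1)^{i+1}·U_i·U_k^i·U_{k+1}^{m−i}. -/
theorem stmt_9 (P Q : ℤ) (U : ℕ → ℤ) (hU0 : U 0 = 0) (hU1 : U 1 = 1)
    (hUrec : ∀ k, U (k+2) = P * U (k+1) - Q * U k) (m k : ℕ) (hm : 1 ≤ m) :
    U (m*k) = ∑ i ∈ Finset.range (m+1),
      (m.choose i : ℤ) * (-1)^(i+1) * U i * (U k)^i * (U (k+1))^(m-i) := by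
  set M : Matrix (Fin 2) (Fin 2) ℤ := !![P, -Q; 1, 0] with hM
  set N : Matrix (Fin 2) (Fin 2) ℤ := P • (1 : Matrix (Fin 2) (Fin 2) ℤ) - M with hN
  have hM2 : M * M = P • M - Q • (1 : Matrix (Fin 2) (Fin 2) ℤ) := by
    rw [hM]
    ext i j
    fin_cases i <;> fin_cases j <;>
      simp [Matrix.mul_apply, Fin.sum_univ_two, Matrix.one_apply, Matrix.sub_apply,
        Matrix.smul_apply, Fin.mk_zero, Fin.mk_one, ← Matrix.diagonal_intCast,
        Matrix.diagonal_apply] <;> ring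
  have hMN : M * N = Q • (1 : Matrix (Fin 2) (Fin 2) ℤ) := by
    rw [hN, Matrix.mul_sub, mul_smul_comm, mul_one, hM2]
    abel
  have hNM : N * M = Q • (1 : Matrix (Fin 2) (Fin 2) ℤ) := by
    rw [hN, Matrix.sub_mul, smul_mul_assoc, one_mul, hM2]
    abel
  -- powers of M and N in terms of U
  have powM : ∀ j, M ^ j = U (j+1) • (1 : Matrix (Fin 2) (Fin 2) ℤ) - U j • N := by
    intro j
    induction j with
    | zero => simp [hU0, hU1]
    | succ j ih =>
      rw [pow_succ, ih, Matrix.sub_mul, smul_mul_assoc, smul_mul_assoc, one_mul,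
        hNM, smul_smul, hUrec j, hN]
      module
  have powN : ∀ j, N ^ j = U (j+1) • (1 : Matrix (Fin 2) (Fin 2) ℤ) - U j • M := by
    intro j
    induction j with
    | zero => simp [hU0, hU1]
    | succ j ih =>
      have hM' : M = P • (1 : Matrix (Fin 2) (Fin 2) ℤ) - N := by rw [hN]; abel
      rw [pow_succ, ih, Matrix.sub_mul, smul_mul_assoc, smul_mul_assoc, one_mul,
        hMN, smul_smul, hUrec j]
      rw [hM']
      module
  have diff : ∀ n, M ^ n - N ^ n = U n • (M - N) := by
    intro n
    rw [powM n, powN n]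
    module
  -- binomial expansion
  have expand : ∀ X : Matrix (Fin 2) (Fin 2) ℤ, (U (k+1) • (1 : Matrix (Fin 2) (Fin 2) ℤ) - U k • X) ^ m =
      ∑ i ∈ Finset.range (m+1),
        (((-1):ℤ)^i * (U k)^i * (U (k+1))^(m-i) * (m.choose i : ℤ)) • X ^ i := by
    intro X
    have hc : Commute ((-(U k)) • X) (U (k+1) • (1 : Matrix (Fin 2) (Fin 2) ℤ)) :=
      ((Commute.one_right X).smul_right _).smul_left _
    rw [sub_eq_add_neg, ← neg_smul, add_comm, Commute.add_pow hc]
    refine Finset.sum_congr rfl fun i _ => ?_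
    have hcast : ((m.choose i : ℕ) : Matrix (Fin 2) (Fin 2) ℤ) = (m.choose i : ℤ) • (1 : Matrix (Fin 2) (Fin 2) ℤ) := by
      simp
    rw [smul_pow, smul_pow, one_pow, hcast]
    simp only [smul_mul_assoc, mul_smul_comm, mul_one, one_mul, smul_smul]
    congr 1
    ring
  have key : (U (m*k)) • (M - N) =
      (∑ i ∈ Finset.range (m+1),
        (m.choose i : ℤ) * (-1)^(i+1) * U i * (U k)^i * (U (k+1))^(m-i)) • (M - N) := by
    rw [← diff, pow_mul' M, pow_mul' N, powM k, powN k, expand M, expand N,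
      ← Finset.sum_sub_distrib, Finset.sum_smul]
    refine Finset.sum_congr rfl fun i _ => ?_
    rw [← smul_sub, ← neg_sub (M ^ i), smul_neg, ← neg_smul, diff i, smul_smul]
    congr 1
    ring
  have h10 := congrFun (congrFun key 1) 0
  have hMval : (M - N) 1 0 = 2 := by
    rw [hN, hM]
    simp [Matrix.sub_apply, Matrix.smul_apply, Matrix.one_apply, Fin.mk_zero, Fin.mk_one,
      ← Matrix.diagonal_intCast, Matrix.diagonal_apply]
  rw [Matrix.smul_apply, Matrix.smul_apply, hMval] at h10
  have := mul_right_cancel₀ (two_ne_zero) h10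
  simpa using this
end

section
/- Let P, Q be integers, U the Lucas sequence of the first kind and V the Lucas sequence of the second kind with parameters P, Q. For all integers m ≥ 1 and k ≥ 0, V_{mk} = Σ_{i=0}^{m} C(m,i)·(−1)^i·V_i·U_k^i·U_{k+1}^{m−i}. -/
theorem stmt_10 (P Q : ℤ) (U V : ℕ → ℤ) (hU0 : U 0 = 0) (hU1 : U 1 = 1)
    (hUrec : ∀ k, U (k+2) = P * U (k+1) - Q * U k)
    (hV0 : V 0 = 2) (hV1 : V 1 = P)
    (hVrec : ∀ k, V (k+2) = P * V (k+1) - Q * V k) (m k : ℕ) (hm : 1 ≤ m) :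
    V (m*k) = ∑ i ∈ Finset.range (m+1),
      (m.choose i : ℤ) * (-1)^i * V i * (U k)^i * (U (k+1))^(m-i) := by
  -- V n = 2 U(n+1) - P U n
  have hVU : ∀ n, V n = 2 * U (n+1) - P * U n := by
    have key : ∀ n, V n = 2 * U (n+1) - P * U n ∧
        V (n+1) = 2 * U (n+2) - P * U (n+1) := by
      intro n
      induction n with
      | zero =>
        constructor
        · rw [hV0, hU1, hU0]; ring
        · rw [hV1, hUrec 0, hU1, hU0]; ring
      | succ n ih =>
        refine ⟨ih.2, ?_⟩
        rw [hVrec n, hUrec (n+1), ih.1, ih.2, hUrec n]; ring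
    exact fun n => (key n).1
  have ha0 : (!![P, -Q; 1, 0] : Matrix (Fin 2) (Fin 2) ℤ) * !![P, -Q; 1, 0]
      = P • !![P, -Q; 1, 0] - Q • 1 := by
    ext i j
    fin_cases i <;> fin_cases j <;>
      simp [Matrix.mul_apply, Fin.sum_univ_two, Matrix.smul_apply, Matrix.sub_apply,
        Matrix.one_apply, ← Matrix.diagonal_intCast, Matrix.diagonal_apply] <;> ring
  have ha0' : Matrix.trace (!![P, -Q; 1, 0] : Matrix (Fin 2) (Fin 2) ℤ) = P := by
    simp [Matrix.trace_fin_two]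
  set M := Matrix (Fin 2) (Fin 2) ℤ with hM
  obtain ⟨a, haDef⟩ : ∃ a : M, a = !![P, -Q; 1, 0] := ⟨_, rfl⟩
  have ha : a * a = P • a - Q • 1 := by rw [haDef]; exact ha0
  obtain ⟨b, hbDef⟩ : ∃ b : M, b = P • 1 - a := ⟨_, rfl⟩
  have hb : b * b = P • b - Q • 1 := by
    rw [hbDef]
    simp only [mul_sub, sub_mul, smul_mul_assoc, mul_smul_comm, one_mul, mul_one,
      smul_smul, smul_sub]
    rw [ha]
    module
  have powlem : ∀ (x : M), x * x = P • x - Q • 1 →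
      ∀ n, x ^ n = U n • x + (U (n+1) - P * U n) • (1 : M) := by
    intro x hx
    have key : ∀ n, (x ^ n = U n • x + (U (n+1) - P * U n) • (1 : M)) ∧
        (x ^ (n+1) = U (n+1) • x + (U (n+2) - P * U (n+1)) • (1 : M)) := by
      intro n
      induction n with
      | zero =>
        constructor
        · rw [hU0, hU1]; simp
        · rw [hU1, hUrec 0, hU0, hU1]
          have hz : (P * 1 - Q * 0) - P * 1 = 0 := by ring
          rw [hz, zero_smul, add_zero, one_smul, pow_one]
      | succ n ih =>
        refine ⟨ih.2, ?_⟩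
        have : x ^ (n+2) = x ^ (n+1) * x := by rw [pow_succ]
        rw [this, ih.2, add_mul, smul_mul_assoc, smul_mul_assoc, one_mul, hx,
          hUrec (n+1), hUrec n]
        module
    exact fun n => (key n).1
  have ha' : ∀ n, a ^ n = U n • a + (U (n+1) - P * U n) • (1 : M) := powlem a ha
  have hb' : ∀ n, b ^ n = U n • b + (U (n+1) - P * U n) • (1 : M) := powlem b hb
  -- traces
  have tra : Matrix.trace a = P := by rw [haDef]; exact ha0'
  have trone : Matrix.trace (1 : M) = 2 := by simp [Matrix.trace_one]
  have trb : Matrix.trace b = P := by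
    rw [hbDef, Matrix.trace_sub, Matrix.trace_smul, tra, trone, smul_eq_mul]; ring
  have trbn : ∀ n, Matrix.trace (b ^ n) = V n := by
    intro n
    rw [hb' n, Matrix.trace_add, Matrix.trace_smul, Matrix.trace_smul, trb, trone,
      hVU n]
    simp only [smul_eq_mul]
    ring
  have tran : Matrix.trace (a ^ (m*k)) = V (m*k) := by
    rw [ha' (m*k), Matrix.trace_add, Matrix.trace_smul, Matrix.trace_smul, tra, trone,
      hVU (m*k)]
    simp only [smul_eq_mul]
    ring
  -- a^k as combination
  have hak : a ^ k = (-(U k)) • b + (U (k+1)) • (1 : M) := by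
    rw [ha' k, hbDef]
    module
  have hcomm : Commute ((-(U k)) • b) ((U (k+1)) • (1 : M)) :=
    (Commute.one_right _).smul_right _
  have hbin : a ^ (m*k) = ∑ i ∈ Finset.range (m+1),
      ((-(U k)) • b) ^ i * ((U (k+1)) • (1 : M)) ^ (m-i) * (m.choose i : M) := by
    rw [mul_comm m k, pow_mul, hak, hcomm.add_pow]
  have := congrArg Matrix.trace hbin
  rw [tran, Matrix.trace_sum] at this
  rw [this]
  apply Finset.sum_congr rfl
  intro i hi
  have hcast : ((m.choose i : ℕ) : M) = ((m.choose i : ℤ)) • (1 : M) := by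
    simp
  rw [smul_pow, smul_pow, one_pow, hcast]
  simp only [smul_mul_assoc, mul_smul_comm, mul_one, Matrix.trace_smul, smul_eq_mul]
  rw [Matrix.trace_smul, Matrix.trace_smul, trbn i]
  simp only [smul_eq_mul]
  push_cast
  ring
end

section
/- Let P, Q be integers and U the Lucas sequence of the first kind with parameters P, Q. For all k ≥ 1, (Q·U_{k−1}·U_{k+2})^2 + ((P^2 − Q)·U_k·U_{k+1})^2 = (P·U_{2k+1})^2 + 2Q(P^2 + Q)·U_{k−1}·U_k·U_{k+1}·U_{k+2}. -/
theorem stmt_11 (P Q : ℤ) (U : ℕ → ℤ) (hU0 : U 0 = 0) (hU1 : U 1 = 1)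
    (hUrec : ∀ k, U (k+2) = P * U (k+1) - Q * U k) (k : ℕ) (hk : 1 ≤ k) :
    (Q * U (k-1) * U (k+2))^2 + ((P^2 - Q) * U k * U (k+1))^2 =
      (P * U (2*k+1))^2 + 2 * Q * (P^2 + Q) * U (k-1) * U k * U (k+1) * U (k+2) := by
  have add : ∀ n m, U (m + n + 1) = U (m+1) * U (n+1) - Q * U m * U n := by
    intro n
    induction n with
    | zero => intro m; simp [hU0, hU1]
    | succ n ih =>
      intro m
      have h1 := ih (m+1)
      have h2 := ih m
      have e : m + (n+1) + 1 = (m+1) + n + 1 := by ring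
      rw [e, h1, hUrec m, hUrec n]
      ring
  obtain ⟨j, rfl⟩ : ∃ j, k = j + 1 := ⟨k - 1, (Nat.succ_pred_eq_of_pos hk).symm⟩
  have hd : 2 * (j+1) + 1 = (j+1) + (j+1) + 1 := by ring
  rw [hd, add (j+1) (j+1)]
  simp only [Nat.add_sub_cancel]
  rw [hUrec (j+1), hUrec j]
  ring
end

section
/- Let P, Q be integers and U the Lucas sequence of the first kind with parameters P, Q. For all k ≥ 2, U_{k+2}^2 − Q^4·U_{k−2}^2 = (P^2 − 2Q)·(U_{k+1}^2 − Q^2·U_{k−1}^2). -/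
theorem stmt_17 (P Q : ℤ) (U : ℕ → ℤ) (hU0 : U 0 = 0) (hU1 : U 1 = 1)
    (hUrec : ∀ k, U (k+2) = P * U (k+1) - Q * U k) (k : ℕ) (hk : 2 ≤ k) :
    (U (k+2))^2 - Q^4 * (U (k-2))^2 = (P^2 - 2*Q) * ((U (k+1))^2 - Q^2 * (U (k-1))^2) := by
  obtain ⟨m, rfl⟩ : ∃ m, k = m + 2 := ⟨k - 2, by omega⟩
  simp only [Nat.add_sub_cancel, show m + 2 - 1 = m + 1 from rfl]
  have h1 := hUrec m
  have h2 := hUrec (m + 1)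
  have h3 := hUrec (m + 2)
  rw [show m+2+2 = m+1+1+2 from rfl] at h3 ⊢
  rw [h3, h2, h1]
  ring
end

section
/- For all integers k, l, m with k ≥ m and k ≥ l (and l, m ≥ 0), F_{2l}·(F_{k+m}^2 − F_{k−m}^2) = F_{2m}·(F_{k+l}^2 − F_{k−l}^2), where F is the Fibonacci sequence. -/
lemma cassini_int (n : ℕ) :
    (Nat.fib (n+1) : ℤ)^2 = (Nat.fib (n+1) : ℤ) * Nat.fib n + (Nat.fib n : ℤ)^2 + (-1)^n := by
  induction n with
  | zero => simp
  | succ n ih =>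
    have h : (Nat.fib (n+2) : ℤ) = Nat.fib n + Nat.fib (n+1) := by
      exact_mod_cast Nat.fib_add_two
    rw [h]
    linear_combination (-1 : ℤ) * ih

lemma key_fib (a m : ℕ) :
    (Nat.fib (a + 2*m) : ℤ)^2 - (Nat.fib a : ℤ)^2 =
      (Nat.fib (2*(a+m)) : ℤ) * Nat.fib (2*m) := by
  cases m with
  | zero => simp
  | succ m =>
    set A : ℤ := (Nat.fib a : ℤ) with hA
    set B : ℤ := (Nat.fib (a+1) : ℤ) with hB
    set U : ℤ := (Nat.fib m : ℤ) with hU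
    set V : ℤ := (Nat.fib (m+1) : ℤ) with hV
    have H21 : (Nat.fib (2*m+1) : ℤ) = V^2 + U^2 := by
      rw [Nat.fib_two_mul_add_one]; push_cast; ring
    have H22 : (Nat.fib (2*m+2) : ℤ) = V * (2*U + V) := by
      rw [Nat.fib_two_mul_add_two]; push_cast; ring
    have HA : (Nat.fib (a + 2*(m+1)) : ℤ) = A * (V^2 + U^2) + B * (V * (2*U + V)) := by
      have e : a + 2*(m+1) = a + (2*m+1) + 1 := by ring
      have h := Nat.fib_add a (2*m+1)
      rw [e]
      push_cast [h]
      rw [show 2*m+1+1 = 2*m+2 by ring, H21, H22, ← hA, ← hB]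
    have Hs : (Nat.fib (2*(m+1)) : ℤ) = V * (2*U + V) := by
      rw [show 2*(m+1) = 2*m+2 by ring]; exact H22
    have HW1 : (Nat.fib (a+m+1) : ℤ) = A*U + B*V := by
      have := Nat.fib_add a m
      push_cast [this]; ring
    have HW2 : (Nat.fib (a+m+2) : ℤ) = A*V + B*(U+V) := by
      have e : a+m+2 = a + (m+1) + 1 := by ring
      rw [e, Nat.fib_add]
      push_cast [Nat.fib_add_two]
      ring
    have HW0 : (Nat.fib (a+m) : ℤ) = A*V + B*(U+V) - (A*U + B*V) := by
      have h2 : (Nat.fib (a+m+2) : ℤ) = Nat.fib (a+m) + Nat.fib (a+m+1) := by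
        exact_mod_cast Nat.fib_add_two
      linear_combination HW2 - h2 - HW1
    have HT : (Nat.fib (2*(a+(m+1))) : ℤ)
        = (A*U + B*V) * (2*(A*V + B*(U+V) - (A*U + B*V)) + (A*U + B*V)) := by
      have e : 2*(a+(m+1)) = 2*(a+m) + 2 := by ring
      rw [e, Nat.fib_two_mul_add_two]
      push_cast
      rw [HW1, HW0]
    have hVc : V^2 = V*U + U^2 + (-1 : ℤ)^m := cassini_int m
    have hsq : ((-1 : ℤ)^m)^2 = 1 := by
      rw [← pow_mul, mul_comm, pow_mul]; norm_num
    rw [HA, Hs, HT]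
    linear_combination (A^2*((-1:ℤ)^m + V^2 - U*V - U^2)) * hVc + A^2 * hsq

theorem stmt_18 (k l m : ℕ) (hm : m ≤ k) (hl : l ≤ k) :
    (Nat.fib (2*l) : ℤ) * ((Nat.fib (k+m) : ℤ)^2 - (Nat.fib (k-m) : ℤ)^2) =
      (Nat.fib (2*m) : ℤ) * ((Nat.fib (k+l) : ℤ)^2 - (Nat.fib (k-l) : ℤ)^2) := by
  have h1 := key_fib (k-m) m
  have h2 := key_fib (k-l) l
  rw [show k-m+2*m = k+m by omega, show 2*(k-m+m) = 2*k by omega] at h1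
  rw [show k-l+2*l = k+l by omega, show 2*(k-l+l) = 2*k by omega] at h2
  rw [h1, h2]; ring
end
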